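/- Fix positive integers T, t and x ∈ ℝ^{Tt}. For n ∈ {1, …, Tt}: if z̃_n ∈ [31/32, 33/32], Dominate(n) does not hold, and z̃_{n−1} ≤ 33/32 and z̃_{n+1} ≤ 33/32, then there exists k ∈ {1, …, n−1} such that Dominate(k) holds and z̃_k > 5/7. -/

import Mathlib

/-- The `k`-th coordinate (1-indexed) of `x ∈ ℝ^d`, with out-of-range coordinates
(including the convention `x_0 = 0`) equal to `0`. -/
noncomputable def coord {d : ℕ} (x : EuclideanSpace ℝ (Fin d)) (k : ℕ) : ℝ :=
  if h : 1 ≤ k ∧ k ≤ d then x ⟨k - 1, by omega⟩ else 0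

/-- The piecewise scalar component `v_y` of the hard instance. -/
noncomputable def vFun (y x : ℝ) : ℝ :=
  if x ≤ 31 / 32 * y then x ^ 2 / 2
  else if x ≤ y then x ^ 2 / 2 - 16 * (x - 31 / 32 * y) ^ 2
  else if x ≤ 33 / 32 * y then x ^ 2 / 2 - y ^ 2 / 32 + 16 * (x - 33 / 32 * y) ^ 2
  else x ^ 2 / 2 - y ^ 2 / 32

/-- The quadratic (convex) part `q_{T,t}` of the hard instance, with the convention
`x_0 = 0` (encoded by `coord x 0 = 0`). -/
noncomputable def qFun (T t : ℕ) (x : EuclideanSpace ℝ (Fin (T * t))) : ℝ :=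
  (1 / 2) * ∑ i ∈ Finset.range t,
    ((7 / 8 * coord x (i * T) - coord x (i * T + 1)) ^ 2
      + ∑ j ∈ Finset.Icc 1 (T - 1), (coord x (i * T + j + 1) - coord x (i * T + j)) ^ 2)

/-- The reference vector `y ∈ ℝ^{Tt}` with `y_{qT+b} = (7/8)^q` for `b ∈ {1, …, T}`;
in 0-based indexing, `y i = (7/8)^(i / T)`. -/
noncomputable def yVec (T t : ℕ) : EuclideanSpace ℝ (Fin (T * t)) :=
  WithLp.toLp 2 (fun i : Fin (T * t) => (7 / 8 : ℝ) ^ ((i : ℕ) / T))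

/-- The hard instance `g_{T,t}(x) = q_{T,t}(x) + Σ_{i=1}^{Tt} v_{y_i}(x_i)`. -/
noncomputable def gFun (T t : ℕ) (x : EuclideanSpace ℝ (Fin (T * t))) : ℝ :=
  qFun T t x + ∑ i : Fin (T * t), vFun (yVec T t i) (x i)

/-- Extended coordinates: `x̃_0 = 0`, `x̃_i = x_i` for `1 ≤ i ≤ Tt`, `x̃_{Tt+1} = x_{Tt}`. -/
noncomputable def xTilde (T t : ℕ) (x : EuclideanSpace ℝ (Fin (T * t))) (k : ℕ) : ℝ :=
  if k ≤ T * t then coord x k else coord x (T * t)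

/-- Extended reference coordinates: `ỹ_0 = 1`, `ỹ_i = y_i` for `1 ≤ i ≤ Tt`,
`ỹ_{Tt+1} = y_{Tt}`. -/
noncomputable def yTilde (T t : ℕ) (k : ℕ) : ℝ :=
  if k = 0 then 1
  else if k ≤ T * t then coord (yVec T t) k
  else coord (yVec T t) (T * t)

/-- The ratios `z̃_k = x̃_k / ỹ_k`. -/
noncomputable def zTilde (T t : ℕ) (x : EuclideanSpace ℝ (Fin (T * t))) (k : ℕ) : ℝ :=
  xTilde T t x k / yTilde T t k

/-- `Dominate k` holds iff `x_k = 0` or `|(∇g_{T,t}(x))_k| > 0.19·|x_k|`. -/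
def Dominate (T t : ℕ) (x : EuclideanSpace ℝ (Fin (T * t))) (k : ℕ) : Prop :=
  coord x k = 0 ∨ |coord (gradient (gFun T t) x) k| > 0.19 * |coord x k|

/-!
Write `x_k = ỹ_k z̃_k`. Since `ỹ_{k+1} = c_k ỹ_k` with `c_k ∈ {7/8, 1}`, the `k`-th partial
derivative of `g_{T,t}` is `ỹ_k ((z̃_k - z̃_{k-1}) - c_k² (z̃_{k+1} - z̃_k) + v₁'(z̃_k))`, where
`v₁'(z) = z` outside `[31/32, 33/32]` and `v₁' ≥ 0` on it. So if `Dominate k` fails, then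
`z̃_{k-1} ≥ 0.81 z̃_k + c_k² (z̃_k - z̃_{k+1}) + v₁'(z̃_k)`, and a case analysis shows that the
region `Trapped` for `(z̃_k, z̃_{k+1})` is passed on to `(z̃_{k-1}, z̃_k)`. The hypotheses place
`(z̃_n, z̃_{n+1})` in this region, which forces `z̃_k ≥ 18/25 > 5/7`; descending from `n`, it
cannot reach `k = 0` since `z̃_0 = 0`, so some `k < n` with `Dominate k` stops the descent.
-/

theorem hasDerivAt_max_zero_sq (x : ℝ) :
    HasDerivAt (fun u : ℝ => max u 0 ^ 2) (2 * max x 0) x := by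
  rcases lt_trichotomy x 0 with hx | rfl | hx
  · rw [max_eq_right hx.le, mul_zero]
    refine (hasDerivAt_const x (0 : ℝ)).congr_of_eventuallyEq ?_
    filter_upwards [eventually_lt_nhds hx] with u hu
    simp [max_eq_right hu.le]
  · have hle : HasDerivWithinAt (fun u : ℝ => max u 0 ^ 2) 0 (Set.Iic 0) 0 :=
      (hasDerivWithinAt_const 0 _ (0 : ℝ)).congr
        (fun u hu => by simp [max_eq_right (Set.mem_Iic.mp hu)]) (by simp)
    have hge : HasDerivWithinAt (fun u : ℝ => max u 0 ^ 2) 0 (Set.Ici 0) 0 := by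
      simpa using ((hasDerivAt_pow 2 (0 : ℝ)).hasDerivWithinAt (s := Set.Ici 0)).congr
        (fun u hu => by simp [max_eq_left (Set.mem_Ici.mp hu)]) (by simp)
    simpa [Set.Iic_union_Ici] using hle.union hge
  · rw [max_eq_left hx.le]
    refine ((hasDerivAt_pow 2 x).congr_deriv (by ring)).congr_of_eventuallyEq ?_
    filter_upwards [eventually_gt_nhds hx] with u hu
    simp [max_eq_left hu.le]

noncomputable def vDeriv (y x : ℝ) : ℝ :=
  x - 32 * max (x - 31 / 32 * y) 0 + 64 * max (x - y) 0 - 32 * max (x - 33 / 32 * y) 0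

theorem vFun_eq_sum_max_sq {y : ℝ} (hy : 0 ≤ y) (x : ℝ) :
    vFun y x = x ^ 2 / 2 - 16 * max (x - 31 / 32 * y) 0 ^ 2 + 32 * max (x - y) 0 ^ 2
      - 16 * max (x - 33 / 32 * y) 0 ^ 2 := by
  unfold vFun
  split_ifs with h₁ h₂ h₃
  · rw [max_eq_right (by linarith), max_eq_right (by linarith), max_eq_right (by linarith)]
    ring
  · rw [max_eq_left (by linarith), max_eq_right (by linarith), max_eq_right (by linarith)]
    ring
  · rw [max_eq_left (by linarith), max_eq_left (by linarith), max_eq_right (by linarith)]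
    ring
  · rw [max_eq_left (by linarith), max_eq_left (by linarith), max_eq_left (by linarith)]
    ring

theorem hasDerivAt_vFun {y : ℝ} (hy : 0 ≤ y) (x : ℝ) : HasDerivAt (vFun y) (vDeriv y x) x := by
  have hsq (c : ℝ) : HasDerivAt (fun u : ℝ => max (u - c) 0 ^ 2) (2 * max (x - c) 0) x :=
    (hasDerivAt_max_zero_sq (x - c)).comp_sub_const x c
  have h := ((((hasDerivAt_pow 2 x).div_const 2).sub ((hsq (31 / 32 * y)).const_mul 16)).add
    ((hsq y).const_mul 32)).sub ((hsq (33 / 32 * y)).const_mul 16)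
  rw [funext (vFun_eq_sum_max_sq hy)]
  refine h.congr_deriv ?_
  unfold vDeriv
  ring

theorem vDeriv_mul {y : ℝ} (hy : 0 ≤ y) (z : ℝ) : vDeriv y (y * z) = y * vDeriv 1 z := by
  have hmax (c : ℝ) : max (y * z - c * y) 0 = y * max (z - c) 0 := by
    rw [mul_max_of_nonneg _ _ hy, mul_zero, mul_sub, mul_comm c]
  unfold vDeriv
  rw [hmax, hmax, show y * z - y = y * z - 1 * y by ring, hmax]
  ring_nf

theorem vDeriv_one_of_le {z : ℝ} (hz : z ≤ 31 / 32) : vDeriv 1 z = z := by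
  unfold vDeriv
  rw [max_eq_right (by linarith), max_eq_right (by linarith), max_eq_right (by linarith)]
  ring

theorem vDeriv_one_of_ge {z : ℝ} (hz : 33 / 32 ≤ z) : vDeriv 1 z = z := by
  unfold vDeriv
  rw [max_eq_left (by linarith), max_eq_left (by linarith), max_eq_left (by linarith)]
  ring

theorem vDeriv_one_nonneg {z : ℝ} (hz : 0 ≤ z) : 0 ≤ vDeriv 1 z := by
  unfold vDeriv
  rcases le_total z (31 / 32) with h₁ | h₁
  · rw [max_eq_right (by linarith), max_eq_right (by linarith), max_eq_right (by linarith)]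
    linarith
  rcases le_total z 1 with h₂ | h₂
  · rw [max_eq_left (by linarith), max_eq_right (by linarith), max_eq_right (by linarith)]
    linarith
  rcases le_total z (33 / 32) with h₃ | h₃
  · rw [max_eq_left (by linarith), max_eq_left (by linarith), max_eq_right (by linarith)]
    linarith
  · rw [max_eq_left (by linarith), max_eq_left (by linarith), max_eq_left (by linarith)]
    linarith

theorem hasFDerivAt_half_sum_sq {E ι : Type*} [NormedAddCommGroup E] [NormedSpace ℝ E]
    (s : Finset ι) (ℓ : ι → E →L[ℝ] ℝ) (x : E) :
    HasFDerivAt (fun y => 1 / 2 * ∑ k ∈ s, ℓ k y ^ 2) (∑ k ∈ s, ℓ k x • ℓ k) x := by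
  have h : HasFDerivAt (fun y => ∑ k ∈ s, ℓ k y ^ 2) (∑ k ∈ s, (2 * ℓ k x) • ℓ k) x :=
    HasFDerivAt.fun_sum fun k _ => by
      simpa [Function.comp_def] using
        (hasDerivAt_pow 2 (ℓ k x)).comp_hasFDerivAt x (ℓ k).hasFDerivAt
  refine (h.const_mul (1 / 2)).congr_fderiv ?_
  rw [Finset.smul_sum]
  refine Finset.sum_congr rfl fun k _ => ?_
  rw [smul_smul]
  ring_nf

theorem hasFDerivAt_sum_apply {ι : Type*} [Fintype ι] {φ : ι → ℝ → ℝ} {φ' : ι → ℝ}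
    {x : EuclideanSpace ℝ ι} (hφ : ∀ i, HasDerivAt (φ i) (φ' i) (x i)) :
    HasFDerivAt (fun y : EuclideanSpace ℝ ι => ∑ i, φ i (y i))
      (∑ i, φ' i • EuclideanSpace.proj (𝕜 := ℝ) i) x :=
  HasFDerivAt.fun_sum fun i _ =>
    (hφ i).comp_hasFDerivAt x (EuclideanSpace.proj (𝕜 := ℝ) i).hasFDerivAt

theorem gradient_apply_of_hasFDerivAt {ι : Type*} [Fintype ι] [DecidableEq ι]
    {f : EuclideanSpace ℝ ι → ℝ} {L : EuclideanSpace ℝ ι →L[ℝ] ℝ} {x : EuclideanSpace ℝ ι}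
    (h : HasFDerivAt f L x) (i : ι) : gradient f x i = L (EuclideanSpace.single i 1) := by
  have hL := InnerProductSpace.toDual_symm_apply (x := EuclideanSpace.single i (1 : ℝ)) (y := L)
  rw [EuclideanSpace.inner_single_right] at hL
  rw [(hasFDerivAt_iff_hasGradientAt.mp h).gradient]
  simpa using hL

theorem Finset.sum_range_mul_eq_sum_sum {M : Type*} [AddCommMonoid M] (f : ℕ → M) (T t : ℕ) :
    ∑ k ∈ range (T * t), f k = ∑ i ∈ range t, ∑ j ∈ range T, f (i * T + j) := by
  induction t with
  | zero => simp
  | succ t ih => rw [Nat.mul_succ, sum_range_add, ih, sum_range_succ, mul_comm T t]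

section Coordinates

variable {d : ℕ}

noncomputable def coordCLM (d k : ℕ) : EuclideanSpace ℝ (Fin d) →L[ℝ] ℝ :=
  if h : 1 ≤ k ∧ k ≤ d then EuclideanSpace.proj (⟨k - 1, by omega⟩ : Fin d) else 0

@[simp]
theorem coordCLM_apply (k : ℕ) (x : EuclideanSpace ℝ (Fin d)) : coordCLM d k x = coord x k := by
  unfold coordCLM coord
  split_ifs <;> rfl

@[simp]
theorem coord_zero (x : EuclideanSpace ℝ (Fin d)) : coord x 0 = 0 := by
  simp [coord]

theorem coord_succ (x : EuclideanSpace ℝ (Fin d)) (m : Fin d) : coord x (m + 1) = x m := by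
  simp [coord]

theorem coord_single (m : Fin d) (k : ℕ) :
    coord (EuclideanSpace.single m (1 : ℝ)) k = if k = m + 1 then 1 else 0 := by
  unfold coord
  split_ifs with h₁ h₂ h₂
  · rw [PiLp.single_apply, if_pos (Fin.ext (show k - 1 = (m : ℕ) by omega))]
  · rw [PiLp.single_apply,
      if_neg fun h => h₂ (by have : k - 1 = (m : ℕ) := congrArg Fin.val h; omega)]
  · omega
  · rfl

end Coordinates

section Chain

variable {T t : ℕ}

/-- The factor `7/8` couples the last coordinate of each block to the first one of the next. -/
noncomputable def chainCoeff (T k : ℕ) : ℝ := if T ∣ k then 7 / 8 else 1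

noncomputable def chainDiff (T t k : ℕ) : EuclideanSpace ℝ (Fin (T * t)) →L[ℝ] ℝ :=
  coordCLM (T * t) (k + 1) - chainCoeff T k • coordCLM (T * t) k

theorem chainDiff_apply (k : ℕ) (x : EuclideanSpace ℝ (Fin (T * t))) :
    chainDiff T t k x = coord x (k + 1) - chainCoeff T k * coord x k := by
  simp [chainDiff]

theorem chainCoeff_sq_le_one (T k : ℕ) : chainCoeff T k ^ 2 ≤ 1 := by
  unfold chainCoeff
  split_ifs <;> norm_num

theorem qFun_eq_half_sum_chainDiff_sq (hT : 0 < T) (x : EuclideanSpace ℝ (Fin (T * t))) :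
    qFun T t x = 1 / 2 * ∑ k ∈ Finset.range (T * t), chainDiff T t k x ^ 2 := by
  unfold qFun
  rw [Finset.sum_range_mul_eq_sum_sum]
  congr 1
  refine Finset.sum_congr rfl fun i _ => ?_
  rw [Finset.range_eq_Ico, Finset.sum_eq_sum_Ico_succ_bot hT,
    show Finset.Ico (0 + 1) T = Finset.Icc 1 (T - 1) by
      ext; simp only [Finset.mem_Ico, Finset.mem_Icc]; omega]
  congr 1
  · simp only [chainDiff_apply, chainCoeff, add_zero, dvd_mul_left, if_true]
    ring
  · refine Finset.sum_congr rfl fun j hj => ?_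
    have hj' := Finset.mem_Icc.mp hj
    have hndvd : ¬ T ∣ i * T + j := fun h =>
      Nat.not_dvd_of_pos_of_lt (by omega) (by omega) ((Nat.dvd_add_right (dvd_mul_left T i)).mp h)
    simp [chainDiff_apply, chainCoeff, hndvd]

theorem hasFDerivAt_gFun (hT : 0 < T) (x : EuclideanSpace ℝ (Fin (T * t))) :
    HasFDerivAt (gFun T t)
      (∑ k ∈ Finset.range (T * t), chainDiff T t k x • chainDiff T t k
        + ∑ i, vDeriv (yVec T t i) (x i) • EuclideanSpace.proj (𝕜 := ℝ) i) x := by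
  have hv := hasFDerivAt_sum_apply (x := x) fun i =>
    hasDerivAt_vFun (pow_nonneg (by norm_num) _ : (0 : ℝ) ≤ yVec T t i) (x i)
  have hq := hasFDerivAt_half_sum_sq (Finset.range (T * t)) (chainDiff T t) x
  rw [show gFun T t = _ from funext fun y => by rw [gFun, qFun_eq_half_sum_chainDiff_sq hT]]
  exact hq.add hv

theorem coord_gradient_gFun (hT : 0 < T) (x : EuclideanSpace ℝ (Fin (T * t))) {j : ℕ}
    (hj₁ : 1 ≤ j) (hj : j ≤ T * t) :
    coord (gradient (gFun T t) x) j = chainDiff T t (j - 1) x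
      - (if j < T * t then chainCoeff T j * chainDiff T t j x else 0)
      + vDeriv (coord (yVec T t) j) (coord x j) := by
  obtain ⟨m, rfl⟩ : ∃ m : Fin (T * t), j = m + 1 := ⟨⟨j - 1, by omega⟩, by simp; omega⟩
  have hsingle (k : ℕ) : chainDiff T t k (EuclideanSpace.single m 1)
      = (if k = m then 1 else 0) - chainCoeff T k * (if k = m + 1 then 1 else 0) := by
    simp [chainDiff_apply, coord_single]
  rw [coord_succ, gradient_apply_of_hasFDerivAt (hasFDerivAt_gFun hT x), coord_succ, coord_succ]
  simp only [add_apply, sum_apply, smul_apply, hsingle, mul_ite, mul_one, mul_zero, smul_eq_mul,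
    mul_sub, Finset.sum_sub_distrib, Finset.sum_ite_eq', Finset.mem_range, Fin.is_lt, ↓reduceIte,
    PiLp.proj_apply, PiLp.single_apply, Finset.mem_univ, add_tsub_cancel_right]
  split_ifs <;> ring

end Chain

section Ratios

variable {T t : ℕ}

theorem yTilde_eq_coord {k : ℕ} (hk₁ : 1 ≤ k) (hk : k ≤ T * t) :
    yTilde T t k = coord (yVec T t) k := by
  rw [yTilde, if_neg (by omega), if_pos hk]

theorem coord_yVec {k : ℕ} (hk₁ : 1 ≤ k) (hk : k ≤ T * t) :
    coord (yVec T t) k = (7 / 8 : ℝ) ^ ((k - 1) / T) := by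
  rw [coord, dif_pos ⟨hk₁, hk⟩]
  rfl

theorem yTilde_pos (hTt : 0 < T * t) (k : ℕ) : 0 < yTilde T t k := by
  unfold yTilde
  split_ifs with h₀ h₁
  · norm_num
  · rw [coord_yVec (by omega) h₁]; positivity
  · rw [coord_yVec hTt le_rfl]; positivity

theorem yTilde_succ {k : ℕ} (hk₁ : 1 ≤ k) (hk : k < T * t) :
    yTilde T t (k + 1) = chainCoeff T k * yTilde T t k := by
  obtain ⟨i, rfl⟩ : ∃ i, k = i + 1 := ⟨k - 1, by omega⟩
  rw [yTilde_eq_coord (by omega) hk, yTilde_eq_coord hk₁ hk.le, coord_yVec (by omega) hk,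
    coord_yVec hk₁ hk.le, show i + 1 + 1 - 1 = i + 1 by omega, show i + 1 - 1 = i by omega,
    Nat.succ_div, chainCoeff]
  split_ifs <;> ring

theorem coord_eq_yTilde_mul_zTilde (hTt : 0 < T * t) (x : EuclideanSpace ℝ (Fin (T * t)))
    {k : ℕ} (hk : k ≤ T * t) : coord x k = yTilde T t k * zTilde T t x k := by
  rw [zTilde, xTilde, if_pos hk, mul_div_cancel₀ _ (yTilde_pos hTt k).ne']

theorem zTilde_zero (x : EuclideanSpace ℝ (Fin (T * t))) : zTilde T t x 0 = 0 := by
  simp [zTilde, xTilde]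

theorem zTilde_succ_last (x : EuclideanSpace ℝ (Fin (T * t))) :
    zTilde T t x (T * t + 1) = zTilde T t x (T * t) := by
  unfold zTilde xTilde yTilde
  rcases Nat.eq_zero_or_pos (T * t) with h | h
  · have hx : coord x (T * t) = 0 := by rw [coord, dif_neg (by omega)]
    simp [hx]
  · simp [h.ne']

theorem chainDiff_eq_yTilde_mul_sub (hTt : 0 < T * t) (x : EuclideanSpace ℝ (Fin (T * t))) {k : ℕ}
    (hk : k < T * t) :
    chainDiff T t k x = yTilde T t (k + 1) * (zTilde T t x (k + 1) - zTilde T t x k) := by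
  rw [chainDiff_apply, coord_eq_yTilde_mul_zTilde hTt x hk,
    coord_eq_yTilde_mul_zTilde hTt x hk.le]
  rcases Nat.eq_zero_or_pos k with rfl | hk₀
  · rw [zTilde_zero]; ring
  · rw [yTilde_succ hk₀ hk]; ring

-- At `j = Tt` there is no coupling to a successor; the convention `z̃_{Tt+1} = z̃_{Tt}` makes the
-- coupling term vanish there, so one formula covers all `j`.
theorem coord_gradient_gFun_eq_yTilde_mul (hTt : 0 < T * t)
    (x : EuclideanSpace ℝ (Fin (T * t))) {j : ℕ} (hj₁ : 1 ≤ j) (hj : j ≤ T * t) :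
    coord (gradient (gFun T t) x) j = yTilde T t j * ((zTilde T t x j - zTilde T t x (j - 1))
      - chainCoeff T j ^ 2 * (zTilde T t x (j + 1) - zTilde T t x j)
      + vDeriv 1 (zTilde T t x j)) := by
  rw [coord_gradient_gFun (Nat.pos_of_ne_zero (left_ne_zero_of_mul hTt.ne')) x hj₁ hj,
    chainDiff_eq_yTilde_mul_sub hTt x (by omega), Nat.sub_add_cancel hj₁,
    ← yTilde_eq_coord hj₁ hj, coord_eq_yTilde_mul_zTilde hTt x hj,
    vDeriv_mul (yTilde_pos hTt j).le]
  split_ifs with hlt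
  · rw [chainDiff_eq_yTilde_mul_sub hTt x hlt, yTilde_succ hj₁ hlt]; ring
  · rw [show j = T * t by omega, zTilde_succ_last]; ring

end Ratios

/-- The region for `(z̃_j, z̃_{j+1})` that, when `Dominate j` fails, passes on to
`(z̃_{j-1}, z̃_j)`. -/
def Trapped (a b : ℝ) : Prop :=
  (33 / 32 < a ∧ b ≤ a) ∨ (31 / 32 ≤ a ∧ a ≤ 33 / 32 ∧ b ≤ a + 1 / 16) ∨
    (18 / 25 ≤ a ∧ a < 31 / 32 ∧ b ≤ a + 13 / 50)

namespace Trapped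

variable {a b : ℝ}

theorem lower_bound (h : Trapped a b) : 18 / 25 ≤ a := by
  rcases h with ⟨h, -⟩ | ⟨h, -⟩ | ⟨h, -⟩ <;> linarith

theorem pred {a' γ : ℝ} (hγ₀ : 0 ≤ γ) (hγ₁ : γ ≤ 1) (h : Trapped a b)
    (hstep : (a - a') - γ * (b - a) + vDeriv 1 a ≤ 19 / 100 * a) : Trapped a' a := by
  have hcoupling {β : ℝ} (hβ : β ≤ 0) (hab : β ≤ a - b) : β ≤ γ * (a - b) := by nlinarith
  rcases h with ⟨h₁, h₂⟩ | ⟨h₁, h₂, h₃⟩ | ⟨h₁, h₂, h₃⟩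
  · rw [vDeriv_one_of_ge h₁.le] at hstep
    have := hcoupling le_rfl (sub_nonneg.mpr h₂)
    exact Or.inl ⟨by linarith, by linarith⟩
  · have := hcoupling (by norm_num : -(1 / 16 : ℝ) ≤ 0) (by linarith)
    have := vDeriv_one_nonneg (by linarith : 0 ≤ a)
    rcases lt_or_ge (33 / 32) a' with h | h
    · exact Or.inl ⟨h, by linarith⟩
    rcases le_or_gt (31 / 32) a' with h' | h'
    · exact Or.inr (Or.inl ⟨h', h, by linarith⟩)
    · exact Or.inr (Or.inr ⟨by linarith, h', by linarith⟩)
  · rw [vDeriv_one_of_le h₂.le] at hstep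
    have := hcoupling (by norm_num : -(13 / 50 : ℝ) ≤ 0) (by linarith)
    exact Or.inl ⟨by linarith, by linarith⟩

end Trapped

theorem trapped_pred_of_not_dominate {T t : ℕ} (hTt : 0 < T * t)
    (x : EuclideanSpace ℝ (Fin (T * t))) {j : ℕ} (hj₁ : 1 ≤ j) (hj : j ≤ T * t)
    (hS : Trapped (zTilde T t x j) (zTilde T t x (j + 1))) (hnd : ¬ Dominate T t x j) :
    Trapped (zTilde T t x (j - 1)) (zTilde T t x j) := by
  have hz : 0 < zTilde T t x j := by linarith [hS.lower_bound]
  have hy := yTilde_pos hTt j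
  rw [Dominate, not_or, not_lt, coord_gradient_gFun_eq_yTilde_mul hTt x hj₁ hj,
    coord_eq_yTilde_mul_zTilde hTt x hj, abs_mul, abs_mul, abs_of_pos hy, abs_of_pos hz] at hnd
  obtain ⟨-, hle⟩ := hnd
  rw [show (0.19 : ℝ) * (yTilde T t j * zTilde T t x j)
      = yTilde T t j * (19 / 100 * zTilde T t x j) by norm_num; ring,
    mul_le_mul_iff_of_pos_left hy] at hle
  exact hS.pred (sq_nonneg _) (chainCoeff_sq_le_one T j) ((le_abs_self _).trans hle)

theorem exists_stop_of_descent {Q P : ℕ → Prop} {n : ℕ} (hn : Q n) (h₀ : ¬ Q 0)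
    (step : ∀ j, 1 ≤ j → j ≤ n → Q j → ¬ P j → Q (j - 1)) :
    ∃ k, 1 ≤ k ∧ k ≤ n ∧ Q k ∧ P k := by
  induction n with
  | zero => exact absurd hn h₀
  | succ n ih =>
    by_cases hP : P (n + 1)
    · exact ⟨n + 1, by omega, le_rfl, hn, hP⟩
    obtain ⟨k, hk₁, hk, hQ, hPk⟩ :=
      ih (step (n + 1) (by omega) le_rfl hn hP) fun j hj₁ hj => step j hj₁ (by omega)
    exact ⟨k, hk₁, by omega, hQ, hPk⟩

theorem exists_dominate_below_general (T t : ℕ)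
    (x : EuclideanSpace ℝ (Fin (T * t))) (n : ℕ) (hn1 : 1 ≤ n) (hn2 : n ≤ T * t)
    (hz : zTilde T t x n ∈ Set.Icc (31 / 32 : ℝ) (33 / 32))
    (hnd : ¬ Dominate T t x n)
    (h2 : zTilde T t x (n + 1) ≤ 33 / 32) :
    ∃ k, 1 ≤ k ∧ k ≤ n - 1 ∧ Dominate T t x k ∧ zTilde T t x k > 5 / 7 := by
  have hTt : 0 < T * t := by omega
  set z := zTilde T t x
  have hstart : Trapped (z n) (z (n + 1)) := Or.inr (Or.inl ⟨hz.1, hz.2, by linarith [hz.1]⟩)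
  have hend : ¬ Trapped (z 0) (z 1) := fun h => by
    linarith [h.lower_bound, zTilde_zero (T := T) (t := t) x]
  obtain ⟨k, hk₁, hkn, hQ, hP⟩ := exists_stop_of_descent (Q := fun j => Trapped (z j) (z (j + 1)))
    (P := Dominate T t x) hstart hend fun j hj₁ hjn hQ hP => by
      simpa [Nat.sub_add_cancel hj₁] using
        trapped_pred_of_not_dominate hTt x hj₁ (hjn.trans hn2) hQ hP
  have hkn' : k ≠ n := by rintro rfl; exact hnd hP
  exact ⟨k, hk₁, by omega, hP, by linarith [hQ.lower_bound]⟩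

/-- For `n ∈ {1, …, Tt}`: if `z̃_n ∈ [31/32, 33/32]`, `Dominate n`
fails, and `z̃_{n-1} ≤ 33/32`, `z̃_{n+1} ≤ 33/32`, then there exists `k ∈ {1, …, n-1}`
with `Dominate k` and `z̃_k > 5/7`. -/
theorem exists_dominate_below (T t : ℕ) (hT : 0 < T) (ht : 0 < t)
    (x : EuclideanSpace ℝ (Fin (T * t))) (n : ℕ) (hn1 : 1 ≤ n) (hn2 : n ≤ T * t)
    (hz : zTilde T t x n ∈ Set.Icc (31 / 32 : ℝ) (33 / 32))
    (hnd : ¬ Dominate T t x n)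
    (h1 : zTilde T t x (n - 1) ≤ 33 / 32)
    (h2 : zTilde T t x (n + 1) ≤ 33 / 32) :
    ∃ k, 1 ≤ k ∧ k ≤ n - 1 ∧ Dominate T t x k ∧ zTilde T t x k > 5 / 7 :=
  exists_dominate_below_general T t x n hn1 hn2 hz hnd h2
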